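/- arXiv:2602.21832 — 5 statements merged into one kernel-verified Lean document; each statement's English description precedes it below -/
import Mathlib

section
/- Let θ ∈ (0, π/2), n ≥ 1, and u ∈ S^n_θ; write t := ⟨u, e_{n+1}⟩ and ζ := u − cos θ e_{n+1} ∈ 𝒞_θ. Let P_u denote the orthogonal projection of ℝ^{n+1} onto the hyperplane u^⊥ (the tangent space of S^n at u). Then the tangential gradient of ℓ at ζ, namely ∇ℓ(ζ) = −cos θ · P_u(e_{n+1}), satisfies ‖∇ℓ(ζ)‖² = cos²θ (1 − t²) ≤ (2 cos²θ / (1 − cos θ)) · ℓ(ζ)². In particular, |∇ℓ|² ≤ c(θ) ℓ² holds on 𝒞_θ with the explicit constant c(θ) = 2 cos²θ / (1 − cos θ). -/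
open Real
open scoped RealInnerProductSpace

/-!
The projection `e - ⟨e, u⟩ u` of the unit vector `e` onto `u^⊥` has squared length `1 - t²`,
which gives the identity. Since `⟨ζ, e⟩ = t - cos θ`, one has `ℓ(ζ) = 1 - t cos θ`, and with
`c = cos θ ≤ t ≤ 1` the inequality follows from the two factorwise bounds
`1 - t ≤ 1 - c t` and `(1 + t)(1 - c) ≤ 2 (1 - c t)`.
-/

theorem norm_sub_inner_smul_sq {E : Type*} [NormedAddCommGroup E] [InnerProductSpace ℝ E]
    (x : E) {u : E} (hu : ‖u‖ = 1) : ‖x - ⟪x, u⟫ • u‖ ^ 2 = ‖x‖ ^ 2 - ⟪x, u⟫ ^ 2 := by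
  rw [norm_sub_sq_real, real_inner_smul_right, norm_smul, hu, Real.norm_eq_abs, mul_one, sq_abs]
  ring

theorem one_sub_sq_mul_one_sub_le {c t : ℝ} (hc : 0 ≤ c) (hct : c ≤ t) (ht : t ≤ 1) :
    (1 - t ^ 2) * (1 - c) ≤ 2 * (1 - c * t) ^ 2 := by
  have h₁ : 1 - t ≤ 1 - c * t := by nlinarith
  have h₂ : (1 + t) * (1 - c) ≤ 2 * (1 - c * t) := by nlinarith
  calc (1 - t ^ 2) * (1 - c) = (1 - t) * ((1 + t) * (1 - c)) := by ring
    _ ≤ (1 - c * t) * (2 * (1 - c * t)) :=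
        mul_le_mul h₁ h₂ (by nlinarith) (by nlinarith)
    _ = 2 * (1 - c * t) ^ 2 := by ring

theorem capillary_ell_gradient_estimate_general (n : ℕ) (θ : ℝ)
    (hθ : θ ∈ Set.Ioo 0 (π / 2))
    (e : EuclideanSpace ℝ (Fin (n + 1)))
    (he : e = EuclideanSpace.single (Fin.last n) 1)
    (u : EuclideanSpace ℝ (Fin (n + 1))) (hu : ‖u‖ = 1)
    (t : ℝ) (ht : t = ⟪u, e⟫) (hut : Real.cos θ ≤ t)
    (ζ : EuclideanSpace ℝ (Fin (n + 1))) (hζ : ζ = u - Real.cos θ • e)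
    (gradℓ : EuclideanSpace ℝ (Fin (n + 1)))
    (hgrad : gradℓ = (-Real.cos θ) • (e - ⟪e, u⟫ • u)) :
    ‖gradℓ‖ ^ 2 = Real.cos θ ^ 2 * (1 - t ^ 2) ∧
      ‖gradℓ‖ ^ 2 ≤ 2 * Real.cos θ ^ 2 / (1 - Real.cos θ) *
        (Real.sin θ ^ 2 - Real.cos θ * ⟪ζ, e⟫) ^ 2 := by
  have he1 : ‖e‖ = 1 := by simp [he]
  have heu : ⟪e, u⟫ = t := by rw [ht, real_inner_comm]
  have ht1 : t ≤ 1 := by simpa [ht, hu, he1] using real_inner_le_norm u e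
  have hcos_pos : 0 < cos θ := cos_pos_of_mem_Ioo ⟨by linarith [hθ.1, pi_pos], hθ.2⟩
  have hcos_lt : cos θ < 1 := by
    simpa using cos_lt_cos_of_nonneg_of_le_pi le_rfl (by linarith [hθ.2, pi_pos]) hθ.1
  have hgrad_sq : ‖gradℓ‖ ^ 2 = cos θ ^ 2 * (1 - t ^ 2) := by
    rw [hgrad, norm_smul, mul_pow, norm_sub_inner_smul_sq e hu, he1, heu, norm_neg,
      Real.norm_eq_abs, sq_abs, one_pow]
  have hℓ : sin θ ^ 2 - cos θ * ⟪ζ, e⟫ = 1 - cos θ * t := by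
    rw [hζ, inner_sub_left, real_inner_smul_left, real_inner_self_eq_norm_sq, he1, ← ht,
      sin_sq]
    ring
  refine ⟨hgrad_sq, ?_⟩
  rw [hgrad_sq, hℓ, div_mul_eq_mul_div, le_div_iff₀ (sub_pos.2 hcos_lt)]
  linarith [mul_le_mul_of_nonneg_left (one_sub_sq_mul_one_sub_le hcos_pos.le hut ht1)
    (sq_nonneg (cos θ))]

/-- Let `θ ∈ (0, π/2)`, `n ≥ 1`, `u ∈ S^n_θ` with `t := ⟨u, e_{n+1}⟩`,
and `ζ := u - cos θ • e_{n+1} ∈ 𝒞_θ`.  The tangential gradient of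
`ℓ(ζ) = sin²θ - cos θ ⟨ζ, e_{n+1}⟩` at `ζ` is `∇ℓ(ζ) = -cos θ • P_u(e_{n+1})`, where
`P_u x = x - ⟨x, u⟩ u` is the orthogonal projection onto `u^⊥`.  Then
`‖∇ℓ(ζ)‖² = cos²θ (1 - t²) ≤ (2 cos²θ / (1 - cos θ)) ℓ(ζ)²`. -/
theorem capillary_ell_gradient_estimate (n : ℕ) (hn : 1 ≤ n) (θ : ℝ)
    (hθ : θ ∈ Set.Ioo 0 (π / 2))
    (e : EuclideanSpace ℝ (Fin (n + 1)))
    (he : e = EuclideanSpace.single (Fin.last n) 1)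
    (u : EuclideanSpace ℝ (Fin (n + 1))) (hu : ‖u‖ = 1)
    (t : ℝ) (ht : t = ⟪u, e⟫) (hut : Real.cos θ ≤ t)
    (ζ : EuclideanSpace ℝ (Fin (n + 1))) (hζ : ζ = u - Real.cos θ • e)
    (gradℓ : EuclideanSpace ℝ (Fin (n + 1)))
    (hgrad : gradℓ = (-Real.cos θ) • (e - ⟪e, u⟫ • u)) :
    ‖gradℓ‖ ^ 2 = Real.cos θ ^ 2 * (1 - t ^ 2) ∧
      ‖gradℓ‖ ^ 2 ≤ 2 * Real.cos θ ^ 2 / (1 - Real.cos θ) *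
        (Real.sin θ ^ 2 - Real.cos θ * ⟪ζ, e⟫) ^ 2 :=
  capillary_ell_gradient_estimate_general n θ hθ e he u hu t ht hut ζ hζ gradℓ hgrad
end

section
/- Let n ≥ 1 and let K ⊂ ℝ^{n+1} be a convex body contained in the closed upper half-space {x : x_{n+1} ≥ 0}. Suppose that at every point x ∈ K with x_{n+1} > 0, every outer unit normal v of K at x satisfies ⟨v, e_{n+1}⟩ > 0. Then for every x = (x', x_{n+1}) ∈ K, the point (x', 0) also belongs to K; that is, the image of K under orthogonal projection onto the hyperplane {x_{n+1} = 0} equals the slice K ∩ {x : x_{n+1} = 0}. -/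
/-!
If `q = x - ⟪x, e⟫ • e` were not in `K`, write `q = p + r • v` with `p` the point of `K` nearest
to `q`, `r > 0`, and `v` an outer unit normal of `K` at `p`. Testing `v` against `x ∈ K`, which
lies straight above `q`, gives `⟪v, e⟫ < 0`; hence `⟪p, e⟫ = ⟪q, e⟫ - r ⟪v, e⟫ > 0`, and the
hypothesis on normals at points of positive height is violated.
-/

open scoped RealInnerProductSpace

section

variable {E : Type*} [NormedAddCommGroup E] [InnerProductSpace ℝ E]

theorem exists_eq_add_pos_smul_outer_normal_of_notMem {K : Set E} (hK : IsComplete K)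
    (hconv : Convex ℝ K) (hne : K.Nonempty) {q : E} (hq : q ∉ K) :
    ∃ p ∈ K, ∃ r : ℝ, 0 < r ∧ ∃ v : E, ‖v‖ = 1 ∧ (∀ y ∈ K, ⟪y - p, v⟫ ≤ 0) ∧
      q = p + r • v := by
  obtain ⟨p, hpK, hpmin⟩ := exists_norm_eq_iInf_of_complete_convex hne hK hconv q
  have hproj : ∀ y ∈ K, ⟪q - p, y - p⟫ ≤ 0 :=
    (norm_eq_iInf_iff_real_inner_le_zero hconv hpK).mp hpmin
  have hr : 0 < ‖q - p‖ := norm_pos_iff.mpr (sub_ne_zero.mpr fun h => hq (h ▸ hpK))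
  refine ⟨p, hpK, ‖q - p‖, hr, ‖q - p‖⁻¹ • (q - p), ?_, fun y hy => ?_, ?_⟩
  · rw [norm_smul, norm_inv, norm_norm, inv_mul_cancel₀ hr.ne']
  · rw [real_inner_smul_right, real_inner_comm]
    exact mul_nonpos_of_nonneg_of_nonpos (inv_nonneg.mpr hr.le) (hproj y hy)
  · rw [smul_smul, mul_inv_cancel₀ hr.ne', one_smul, add_sub_cancel]

theorem inner_sub_inner_smul_self {e : E} (he : ‖e‖ = 1) (x : E) : ⟪x - ⟪x, e⟫ • e, e⟫ = 0 := by
  rw [inner_sub_left, real_inner_smul_left, real_inner_self_eq_norm_sq, he]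
  ring

theorem sub_inner_smul_mem_of_inner_outer_normal_pos {e : E} (he : ‖e‖ = 1) {K : Set E}
    (hK : IsComplete K) (hconv : Convex ℝ K) (hupper : ∀ x ∈ K, 0 ≤ ⟪x, e⟫)
    (hnormal : ∀ x ∈ K, 0 < ⟪x, e⟫ → ∀ v : E, ‖v‖ = 1 → (∀ y ∈ K, ⟪y - x, v⟫ ≤ 0) → 0 < ⟪v, e⟫)
    {x : E} (hx : x ∈ K) : x - ⟪x, e⟫ • e ∈ K := by
  by_contra hq
  obtain ⟨p, hpK, r, hr, v, hv, hnormal_p, hqp⟩ :=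
    exists_eq_add_pos_smul_outer_normal_of_notMem hK hconv ⟨x, hx⟩ hq
  have hx_sub : x - p = r • v + ⟪x, e⟫ • e := by
    rw [← sub_eq_iff_eq_add.mpr hqp]
    abel
  have htest : r + ⟪x, e⟫ * ⟪v, e⟫ ≤ 0 := by
    have := hnormal_p x hx
    rwa [hx_sub, inner_add_left, real_inner_smul_left, real_inner_smul_left,
      real_inner_self_eq_norm_sq, hv, one_pow, mul_one, real_inner_comm v e] at this
  have hve : ⟪v, e⟫ < 0 := by
    by_contra! h
    nlinarith [hupper x hx]
  have hpe : 0 < ⟪p, e⟫ := by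
    have h := inner_sub_inner_smul_self he x
    rw [hqp, inner_add_left, real_inner_smul_left] at h
    nlinarith
  exact hve.not_gt (hnormal p hpK hpe v hv hnormal_p)

end

theorem capillary_body_projection_in_slice_general (n : ℕ)
    (e : EuclideanSpace ℝ (Fin (n + 1)))
    (he : e = EuclideanSpace.single (Fin.last n) 1)
    (K : Set (EuclideanSpace ℝ (Fin (n + 1))))
    (hKcpt : IsCompact K) (hKconv : Convex ℝ K)
    (hKupper : ∀ x ∈ K, 0 ≤ ⟪x, e⟫)
    (hnormal : ∀ x ∈ K, 0 < ⟪x, e⟫ →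
      ∀ v : EuclideanSpace ℝ (Fin (n + 1)), ‖v‖ = 1 →
        (∀ y ∈ K, ⟪y - x, v⟫ ≤ 0) → 0 < ⟪v, e⟫) :
    (∀ x ∈ K, x - ⟪x, e⟫ • e ∈ K) ∧
      (fun x : EuclideanSpace ℝ (Fin (n + 1)) => x - ⟪x, e⟫ • e) '' K
        = K ∩ {x | ⟪x, e⟫ = 0} := by
  have hunit : ‖e‖ = 1 := by simp [he]
  have hmem : ∀ x ∈ K, x - ⟪x, e⟫ • e ∈ K := fun x hx =>
    sub_inner_smul_mem_of_inner_outer_normal_pos hunit hKcpt.isComplete hKconv hKupper hnormal hx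
  refine ⟨hmem, Set.Subset.antisymm ?_ fun y ⟨hy, (hy0 : ⟪y, e⟫ = 0)⟩ => ⟨y, hy, ?_⟩⟩
  · rintro _ ⟨x, hx, rfl⟩
    exact ⟨hmem x hx, inner_sub_inner_smul_self hunit x⟩
  · simp only [hy0, zero_smul, sub_zero]

/-- Let `n ≥ 1` and let `K ⊂ ℝ^{n+1}` be a convex body contained in the
closed upper half-space `{x : x_{n+1} ≥ 0}`.  Suppose that at every point `x ∈ K` with
`x_{n+1} > 0`, every outer unit normal `v` of `K` at `x` satisfies `⟨v, e_{n+1}⟩ > 0`.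
Then for every `x = (x', x_{n+1}) ∈ K`, the point `(x', 0)` also belongs to `K`; that is,
the orthogonal projection of `K` onto the hyperplane `{x_{n+1} = 0}` equals the slice
`K ∩ {x : x_{n+1} = 0}`. -/
theorem capillary_body_projection_in_slice (n : ℕ) (hn : 1 ≤ n)
    (e : EuclideanSpace ℝ (Fin (n + 1)))
    (he : e = EuclideanSpace.single (Fin.last n) 1)
    (K : Set (EuclideanSpace ℝ (Fin (n + 1))))
    (hKcpt : IsCompact K) (hKconv : Convex ℝ K) (hKint : (interior K).Nonempty)
    (hKupper : ∀ x ∈ K, 0 ≤ ⟪x, e⟫)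
    (hnormal : ∀ x ∈ K, 0 < ⟪x, e⟫ →
      ∀ v : EuclideanSpace ℝ (Fin (n + 1)), ‖v‖ = 1 →
        (∀ y ∈ K, ⟪y - x, v⟫ ≤ 0) → 0 < ⟪v, e⟫) :
    (∀ x ∈ K, x - ⟪x, e⟫ • e ∈ K) ∧
      (fun x : EuclideanSpace ℝ (Fin (n + 1)) => x - ⟪x, e⟫ • e) '' K
        = K ∩ {x | ⟪x, e⟫ = 0} :=
  capillary_body_projection_in_slice_general n e he K hKcpt hKconv hKupper hnormal
end

section
/- Let θ ∈ (0, π/2), n ≥ 1, and let K ⊂ ℝ^{n+1} be a convex body contained in the closed upper half-space {x : x_{n+1} ≥ 0} such that K ∩ {x : x_{n+1} = 0} is nonempty and, at every point x ∈ K with x_{n+1} > 0, every outer unit normal v of K at x satisfies ⟨v, e_{n+1}⟩ > cos θ. Then for every unit vector ũ with ⟨ũ, e_{n+1}⟩ = 0, one has h_K(sin θ · ũ + cos θ · e_{n+1}) = sin θ · max{⟨x, ũ⟩ : x ∈ K ∩ {x_{n+1} = 0}}. (That is, the capillary support function of K restricted to the boundary circle of the cap is sin θ times the support function of the base Ω =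 K ∩ {x_{n+1} = 0}.) -/
open Real Set
open scoped RealInnerProductSpace

/-!
Let `u = sin θ • w̃ + cos θ • e` and let `x₀` maximize `⟪·, u⟫` on the compact set `K`. Then `u`
is an outer unit normal of `K` at `x₀`, and `⟪u, e⟫ = cos θ` is not `> cos θ`, so `x₀` cannot lie
above the base: `⟪x₀, e⟫ = 0`. On the base `⟪x, u⟫ = sin θ * ⟪x, w̃⟫`, so `x₀` also maximizes
`⟪·, w̃⟫` there, and both suprema are attained at `x₀`.
-/

section

variable {E : Type*} [NormedAddCommGroup E] [InnerProductSpace ℝ E]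

theorem norm_sin_smul_add_cos_smul_eq_one {w e : E} (hw : ‖w‖ = 1) (he : ‖e‖ = 1)
    (hwe : ⟪w, e⟫ = 0) (θ : ℝ) : ‖sin θ • w + cos θ • e‖ = 1 := by
  have hpyth := norm_add_sq_eq_norm_sq_add_norm_sq_real
    (x := sin θ • w) (y := cos θ • e) (by simp [real_inner_smul_left, real_inner_smul_right, hwe])
  rw [← pow_eq_one_iff_of_nonneg (norm_nonneg _) two_ne_zero]
  simp only [← sq, norm_smul, hw, he, mul_one, norm_eq_abs, sq_abs] at hpyth
  rw [hpyth, sin_sq_add_cos_sq]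

theorem inner_smul_add_smul_of_inner_eq_zero {x w e : E} (hx : ⟪x, e⟫ = 0) (s c : ℝ) :
    ⟪x, s • w + c • e⟫ = s * ⟪x, w⟫ := by
  simp [inner_add_right, real_inner_smul_right, hx]

theorem IsMaxOn.inner_sub_nonpos {K : Set E} {u x₀ : E} (hmax : IsMaxOn (⟪·, u⟫) K x₀) :
    ∀ y ∈ K, ⟪y - x₀, u⟫ ≤ 0 := fun y hy => by
  rw [inner_sub_left, sub_nonpos]
  exact isMaxOn_iff.mp hmax y hy

theorem IsMaxOn.inner_eq_zero_of_inner_le {K : Set E} {e u x₀ : E} {c : ℝ}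
    (hupper : ∀ x ∈ K, 0 ≤ ⟪x, e⟫)
    (hnormal : ∀ x ∈ K, 0 < ⟪x, e⟫ →
      ∀ v : E, ‖v‖ = 1 → (∀ y ∈ K, ⟪y - x, v⟫ ≤ 0) → c < ⟪v, e⟫)
    (hu : ‖u‖ = 1) (hue : ⟪u, e⟫ ≤ c) (hx₀ : x₀ ∈ K) (hmax : IsMaxOn (⟪·, u⟫) K x₀) :
    ⟪x₀, e⟫ = 0 := by
  refine ((hupper x₀ hx₀).eq_or_lt.resolve_right fun hpos => ?_).symm
  exact (hnormal x₀ hx₀ hpos u hu hmax.inner_sub_nonpos).not_ge hue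

theorem sSup_image_inner_smul_add_smul_eq_mul_sSup {K : Set E} {w e x₀ : E} {s c : ℝ}
    (hs : 0 < s) (hx₀ : x₀ ∈ K ∩ {x | ⟪x, e⟫ = 0})
    (hmax : IsMaxOn (⟪·, s • w + c • e⟫) K x₀) :
    sSup ((fun x => ⟪x, s • w + c • e⟫) '' K)
      = s * sSup ((fun x => ⟪x, w⟫) '' (K ∩ {x | ⟪x, e⟫ = 0})) := by
  have hsup_base : sSup ((fun x => ⟪x, w⟫) '' (K ∩ {x | ⟪x, e⟫ = 0})) = ⟪x₀, w⟫ := by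
    refine IsGreatest.csSup_eq ⟨mem_image_of_mem _ hx₀, ?_⟩
    rintro _ ⟨y, ⟨hyK, hye⟩, rfl⟩
    have hy := isMaxOn_iff.mp hmax y hyK
    rw [inner_smul_add_smul_of_inner_eq_zero hye, inner_smul_add_smul_of_inner_eq_zero hx₀.2]
      at hy
    exact le_of_mul_le_mul_left hy hs
  rw [hsup_base, ← inner_smul_add_smul_of_inner_eq_zero hx₀.2 s c]
  exact IsGreatest.csSup_eq ⟨mem_image_of_mem _ hx₀.1, forall_mem_image.mpr hmax⟩

end

theorem capillary_support_on_boundary_circle_general (n : ℕ) (θ : ℝ)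
    (hθ : θ ∈ Set.Ioo 0 (π / 2))
    (e : EuclideanSpace ℝ (Fin (n + 1)))
    (he : e = EuclideanSpace.single (Fin.last n) 1)
    (K : Set (EuclideanSpace ℝ (Fin (n + 1))))
    (hKcpt : IsCompact K)
    (hKupper : ∀ x ∈ K, 0 ≤ ⟪x, e⟫)
    (hslice : (K ∩ {x | ⟪x, e⟫ = 0}).Nonempty)
    (hnormal : ∀ x ∈ K, 0 < ⟪x, e⟫ →
      ∀ v : EuclideanSpace ℝ (Fin (n + 1)), ‖v‖ = 1 →
        (∀ y ∈ K, ⟪y - x, v⟫ ≤ 0) → Real.cos θ < ⟪v, e⟫) :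
    ∀ w : EuclideanSpace ℝ (Fin (n + 1)), ‖w‖ = 1 → ⟪w, e⟫ = 0 →
      sSup ((fun x => ⟪x, Real.sin θ • w + Real.cos θ • e⟫) '' K)
        = Real.sin θ * sSup ((fun x => ⟪x, w⟫) '' (K ∩ {x | ⟪x, e⟫ = 0})) := by
  intro w hw hwe
  have hsin : 0 < sin θ := sin_pos_of_pos_of_lt_pi hθ.1 (hθ.2.trans (by linarith [pi_pos]))
  have he_norm : ‖e‖ = 1 := by simp [he]
  set u := sin θ • w + cos θ • e with hu
  have hue : ⟪u, e⟫ = cos θ := by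
    simp [hu, inner_add_left, real_inner_smul_left, hwe, he_norm]
  obtain ⟨x₀, hx₀K, hmax⟩ := hKcpt.exists_isMaxOn (f := (⟪·, u⟫))
    (hslice.mono inter_subset_left) (by fun_prop)
  have hx₀e : ⟪x₀, e⟫ = 0 := hmax.inner_eq_zero_of_inner_le hKupper hnormal
    (norm_sin_smul_add_cos_smul_eq_one hw he_norm hwe θ) hue.le hx₀K
  exact sSup_image_inner_smul_add_smul_eq_mul_sSup hsin ⟨hx₀K, hx₀e⟩ hmax

/-- Let `θ ∈ (0, π/2)`, `n ≥ 1`, and let `K ⊂ ℝ^{n+1}` be a convex body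
contained in the closed upper half-space whose slice `K ∩ {x_{n+1} = 0}` is nonempty and
such that, at every point `x ∈ K` with `x_{n+1} > 0`, every outer unit normal `v` of `K`
at `x` satisfies `⟨v, e_{n+1}⟩ > cos θ`.  Then for every unit vector `w̃` with
`⟨w̃, e_{n+1}⟩ = 0` one has
`h_K(sin θ • w̃ + cos θ • e_{n+1}) = sin θ · sup {⟨x, w̃⟩ : x ∈ K ∩ {x_{n+1} = 0}}`. -/
theorem capillary_support_on_boundary_circle (n : ℕ) (hn : 1 ≤ n) (θ : ℝ)
    (hθ : θ ∈ Set.Ioo 0 (π / 2))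
    (e : EuclideanSpace ℝ (Fin (n + 1)))
    (he : e = EuclideanSpace.single (Fin.last n) 1)
    (K : Set (EuclideanSpace ℝ (Fin (n + 1))))
    (hKcpt : IsCompact K) (hKconv : Convex ℝ K) (hKint : (interior K).Nonempty)
    (hKupper : ∀ x ∈ K, 0 ≤ ⟪x, e⟫)
    (hslice : (K ∩ {x | ⟪x, e⟫ = 0}).Nonempty)
    (hnormal : ∀ x ∈ K, 0 < ⟪x, e⟫ →
      ∀ v : EuclideanSpace ℝ (Fin (n + 1)), ‖v‖ = 1 →
        (∀ y ∈ K, ⟪y - x, v⟫ ≤ 0) → Real.cos θ < ⟪v, e⟫) :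
    ∀ w : EuclideanSpace ℝ (Fin (n + 1)), ‖w‖ = 1 → ⟪w, e⟫ = 0 →
      sSup ((fun x => ⟪x, Real.sin θ • w + Real.cos θ • e⟫) '' K)
        = Real.sin θ * sSup ((fun x => ⟪x, w⟫) '' (K ∩ {x | ⟪x, e⟫ = 0})) :=
  capillary_support_on_boundary_circle_general n θ hθ e he K hKcpt hKupper hslice hnormal
end

section
/- Let θ ∈ (0, π/2), n ≥ 1, and let K ⊂ ℝ^{n+1} be an even convex body contained in the closed upper half-space {x : x_{n+1} ≥ 0} such that K ∩ {x : x_{n+1} = 0} is nonempty and, at every point x ∈ K with x_{n+1} > 0, every outer unit normal v of K at x satisfies ⟨v, e_{n+1}⟩ > cos θ. Set H := max{x_{n+1} : x ∈ K} and, for unit vectors ũ with ⟨ũ, e_{n+1}⟩ = 0, let h(ũ) := max{⟨x, ũ⟩ : x ∈ K ∩ {x_{n+1} = 0}} be the support function of the base. Then cos θ · H ≤ sin θ · h(ũ) for every such ũ; in particular H ≤ tan θ · min_{ũ} h(ũ). -/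
open Real
open scoped RealInnerProductSpace

/-!
Tilt the horizontal direction `w` towards `e` by the angle `θ`, i.e. take the unit vector
`v = sin θ • w + cos θ • e`. Since `⟪v, e⟫ = cos θ`, the normal condition forbids `v` from being an
outer normal at any point above the base, so `⟪·, v⟫` attains its maximum over `K` on the base,
where it equals `sin θ * ⟪·, w⟫ ≤ sin θ · h(w)`. Evaluating `⟪·, v⟫` at a highest point, reflected
if necessary so that its `w`-component is nonnegative, gives `cos θ · H ≤ sin θ · h(w)`.
-/

section InnerProductSpace

variable {E : Type*} [NormedAddCommGroup E] [InnerProductSpace ℝ E]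

lemma norm_smul_add_smul_of_orthonormal {a b : ℝ} (hab : a ^ 2 + b ^ 2 = 1) {w e : E}
    (hw : ‖w‖ = 1) (he : ‖e‖ = 1) (hwe : ⟪w, e⟫ = 0) : ‖a • w + b • e‖ = 1 := by
  have hsq : ‖a • w + b • e‖ ^ 2 = 1 := by
    rw [norm_add_sq_real, norm_smul, norm_smul, real_inner_smul_left, real_inner_smul_right,
      hwe, hw, he, Real.norm_eq_abs, Real.norm_eq_abs, mul_one, mul_one, sq_abs, sq_abs,
      mul_zero, mul_zero, mul_zero, add_zero, hab]
  rwa [pow_eq_one_iff_of_nonneg (norm_nonneg _) two_ne_zero] at hsq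

variable {K : Set E} {e : E}

lemma inner_eq_zero_of_isMaxOn {c : ℝ} (hKupper : ∀ x ∈ K, 0 ≤ ⟪x, e⟫)
    (hnormal : ∀ x ∈ K, 0 < ⟪x, e⟫ →
      ∀ v : E, ‖v‖ = 1 → (∀ y ∈ K, ⟪y - x, v⟫ ≤ 0) → c < ⟪v, e⟫)
    {v x : E} (hv : ‖v‖ = 1) (hve : ⟪v, e⟫ ≤ c) (hx : x ∈ K)
    (hmax : IsMaxOn (fun y => ⟪y, v⟫) K x) : ⟪x, e⟫ = 0 := by
  by_contra hne
  have hpos : 0 < ⟪x, e⟫ := (hKupper x hx).lt_of_ne' hne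
  have houter : ∀ y ∈ K, ⟪y - x, v⟫ ≤ 0 := fun y hy => by
    rw [inner_sub_left]
    exact sub_nonpos.2 (hmax hy)
  exact (hnormal x hx hpos v hv houter).not_ge hve

lemma sin_mul_inner_add_cos_mul_inner_le {θ : ℝ} (hsin : 0 ≤ sin θ) (hKcpt : IsCompact K)
    (hKne : K.Nonempty) (he : ‖e‖ = 1) (hKupper : ∀ x ∈ K, 0 ≤ ⟪x, e⟫)
    (hnormal : ∀ x ∈ K, 0 < ⟪x, e⟫ →
      ∀ v : E, ‖v‖ = 1 → (∀ y ∈ K, ⟪y - x, v⟫ ≤ 0) → cos θ < ⟪v, e⟫)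
    {w : E} (hw : ‖w‖ = 1) (hwe : ⟪w, e⟫ = 0) {y : E} (hy : y ∈ K) :
    sin θ * ⟪y, w⟫ + cos θ * ⟪y, e⟫
      ≤ sin θ * sSup ((fun x => ⟪x, w⟫) '' (K ∩ {x | ⟪x, e⟫ = 0})) := by
  set v := sin θ • w + cos θ • e
  have hinner (x : E) : ⟪x, v⟫ = sin θ * ⟪x, w⟫ + cos θ * ⟪x, e⟫ := by
    rw [inner_add_right, real_inner_smul_right, real_inner_smul_right]
  have hv : ‖v‖ = 1 := norm_smul_add_smul_of_orthonormal (sin_sq_add_cos_sq θ) hw he hwe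
  have hve : ⟪v, e⟫ = cos θ := by
    rw [real_inner_comm, hinner, real_inner_comm, hwe, real_inner_self_eq_norm_sq, he]
    ring
  obtain ⟨x₀, hx₀K, hx₀max⟩ :=
    hKcpt.exists_isMaxOn hKne (f := fun x => ⟪x, v⟫) (by fun_prop)
  have hx₀e : ⟪x₀, e⟫ = 0 := inner_eq_zero_of_isMaxOn hKupper hnormal hv hve.le hx₀K hx₀max
  have hbdd : BddAbove ((fun x => ⟪x, w⟫) '' (K ∩ {x | ⟪x, e⟫ = 0})) :=
    ((hKcpt.image (f := fun x => ⟪x, w⟫) (by fun_prop)).bddAbove).mono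
      (Set.image_mono Set.inter_subset_left)
  calc sin θ * ⟪y, w⟫ + cos θ * ⟪y, e⟫ = ⟪y, v⟫ := (hinner y).symm
    _ ≤ ⟪x₀, v⟫ := hx₀max hy
    _ = sin θ * ⟪x₀, w⟫ := by rw [hinner, hx₀e, mul_zero, add_zero]
    _ ≤ _ := mul_le_mul_of_nonneg_left (le_csSup hbdd ⟨x₀, ⟨hx₀K, hx₀e⟩, rfl⟩) hsin

lemma exists_mem_inner_eq_and_inner_nonneg (he : ‖e‖ = 1)
    (hKeven : ∀ x ∈ K, (2 * ⟪x, e⟫) • e - x ∈ K) {w : E} (hwe : ⟪w, e⟫ = 0) {x : E}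
    (hx : x ∈ K) : ∃ y ∈ K, ⟪y, e⟫ = ⟪x, e⟫ ∧ 0 ≤ ⟪y, w⟫ := by
  rcases le_or_gt 0 ⟪x, w⟫ with hxw | hxw
  · exact ⟨x, hx, rfl, hxw⟩
  · refine ⟨(2 * ⟪x, e⟫) • e - x, hKeven x hx, ?_, ?_⟩
    · rw [inner_sub_left, real_inner_smul_left, real_inner_self_eq_norm_sq, he]
      ring
    · rw [inner_sub_left, real_inner_smul_left, real_inner_comm w e, hwe]
      linarith

end InnerProductSpace

theorem capillary_height_estimate_general (n : ℕ) (θ : ℝ)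
    (hθ : θ ∈ Set.Ioo 0 (π / 2))
    (e : EuclideanSpace ℝ (Fin (n + 1)))
    (he : e = EuclideanSpace.single (Fin.last n) 1)
    (K : Set (EuclideanSpace ℝ (Fin (n + 1))))
    (hKcpt : IsCompact K)
    (hKupper : ∀ x ∈ K, 0 ≤ ⟪x, e⟫)
    (hslice : (K ∩ {x | ⟪x, e⟫ = 0}).Nonempty)
    (hKeven : ∀ x ∈ K, (2 * ⟪x, e⟫) • e - x ∈ K)
    (hnormal : ∀ x ∈ K, 0 < ⟪x, e⟫ →
      ∀ v : EuclideanSpace ℝ (Fin (n + 1)), ‖v‖ = 1 →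
        (∀ y ∈ K, ⟪y - x, v⟫ ≤ 0) → Real.cos θ < ⟪v, e⟫)
    (H : ℝ) (hH : H = sSup ((fun x => ⟪x, e⟫) '' K)) :
    ∀ w : EuclideanSpace ℝ (Fin (n + 1)), ‖w‖ = 1 → ⟪w, e⟫ = 0 →
      Real.cos θ * H
        ≤ Real.sin θ * sSup ((fun x => ⟪x, w⟫) '' (K ∩ {x | ⟪x, e⟫ = 0})) := by
  intro w hw hwe
  have hKne : K.Nonempty := hslice.mono Set.inter_subset_left
  have hsin : 0 ≤ sin θ := sin_nonneg_of_nonneg_of_le_pi hθ.1.le (by linarith [hθ.2, pi_pos])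
  have hnorm_e : ‖e‖ = 1 := by simp [he]
  obtain ⟨x₁, hx₁K, hHx₁⟩ :=
    hKcpt.exists_sSup_image_eq hKne (f := fun x => ⟪x, e⟫) (by fun_prop)
  obtain ⟨y, hyK, hye, hyw⟩ := exists_mem_inner_eq_and_inner_nonneg hnorm_e hKeven hwe hx₁K
  have htilted := sin_mul_inner_add_cos_mul_inner_le hsin hKcpt hKne hnorm_e hKupper hnormal hw hwe hyK
  rw [hH, hHx₁, ← hye]
  linarith [mul_nonneg hsin hyw]

/-- Let `θ ∈ (0, π/2)`, `n ≥ 1`, and let `K ⊂ ℝ^{n+1}` be an even convex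
body contained in the closed upper half-space with nonempty slice
`K ∩ {x_{n+1} = 0}` such that, at every point `x ∈ K` with `x_{n+1} > 0`, every outer unit
normal `v` of `K` at `x` satisfies `⟨v, e_{n+1}⟩ > cos θ`.  With
`H := max {x_{n+1} : x ∈ K}` and `h(w̃) := max {⟨x, w̃⟩ : x ∈ K ∩ {x_{n+1} = 0}}`, one has
`cos θ · H ≤ sin θ · h(w̃)` for every unit vector `w̃` with `⟨w̃, e_{n+1}⟩ = 0`; in
particular `H ≤ tan θ · min h`. -/
theorem capillary_height_estimate (n : ℕ) (hn : 1 ≤ n) (θ : ℝ)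
    (hθ : θ ∈ Set.Ioo 0 (π / 2))
    (e : EuclideanSpace ℝ (Fin (n + 1)))
    (he : e = EuclideanSpace.single (Fin.last n) 1)
    (K : Set (EuclideanSpace ℝ (Fin (n + 1))))
    (hKcpt : IsCompact K) (hKconv : Convex ℝ K) (hKint : (interior K).Nonempty)
    (hKupper : ∀ x ∈ K, 0 ≤ ⟪x, e⟫)
    (hslice : (K ∩ {x | ⟪x, e⟫ = 0}).Nonempty)
    (hKeven : ∀ x ∈ K, (2 * ⟪x, e⟫) • e - x ∈ K)
    (hnormal : ∀ x ∈ K, 0 < ⟪x, e⟫ →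
      ∀ v : EuclideanSpace ℝ (Fin (n + 1)), ‖v‖ = 1 →
        (∀ y ∈ K, ⟪y - x, v⟫ ≤ 0) → Real.cos θ < ⟪v, e⟫)
    (H : ℝ) (hH : H = sSup ((fun x => ⟪x, e⟫) '' K)) :
    ∀ w : EuclideanSpace ℝ (Fin (n + 1)), ‖w‖ = 1 → ⟪w, e⟫ = 0 →
      Real.cos θ * H
        ≤ Real.sin θ * sSup ((fun x => ⟪x, w⟫) '' (K ∩ {x | ⟪x, e⟫ = 0})) :=
  capillary_height_estimate_general n θ hθ e he K hKcpt hKupper hslice hKeven hnormal H hH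
end

section
/- Let k ≥ 1 be an integer, let p be real with 1 < p < k + 1, let θ ∈ (0, π/2), and let c ≥ 1, c₀ > 0, c₁ > 0. Then there exists a constant C₁ > 0, depending only on k, p, θ, c, c₀, c₁, with the following property: whenever positive real numbers R, H, r_in, r_out satisfy (i) r_in ≤ r_out ≤ c · r_in, (ii) c₀ ≤ R ≤ r_out + H, (iii) H ≤ tan θ · r_in, and (iv) H ≥ c₁ · R^{(1−p)/k} · r_in², then C₁^{−1} ≤ cos θ · H and R ≤ C₁. (Consequently, any quantity s trapped between cos θ · H and R admits the two-sided bound C₁^{−1} ≤ s ≤ C₁.) -/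
open Real

/-!
With `q = (p - 1)/k ∈ (0, 1)`, the height estimate and `H ≤ tan θ · r_in` give
`r_in ≤ (tan θ / c₁) R^q`, while `R ≤ r_out + H ≤ (c + tan θ) r_in`. Hence `R` is bounded by a
sublinear power of itself, which bounds `R` from above. Then
`r_in ≥ R / (c + tan θ) ≥ c₀ / (c + tan θ)`, and the height estimate, now with `R^(-q)` bounded
below, bounds `H` from below.
-/

lemma le_rpow_inv_of_le_mul_rpow {x A q : ℝ} (hx : 0 < x) (hq : q < 1) (h : x ≤ A * x ^ q) :
    x ≤ A ^ (1 - q)⁻¹ := by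
  have hxq : 0 < x ^ q := rpow_pos_of_pos hx q
  have hA : 0 ≤ A := le_of_lt <| pos_of_mul_pos_left (hx.trans_le h) hxq.le
  rwa [le_rpow_inv_iff_of_pos hx.le hA (sub_pos.2 hq), rpow_sub hx, rpow_one, div_le_iff₀ hxq]

lemma exists_pos_inv_le_and_le {m M : ℝ} (hm : 0 < m) (hM : 0 < M) :
    ∃ C : ℝ, 0 < C ∧ C⁻¹ ≤ m ∧ M ≤ C :=
  ⟨max M m⁻¹, lt_max_of_lt_left hM, inv_le_of_inv_le₀ hm (le_max_right _ _),
    le_max_left _ _⟩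

section Skeleton

variable {c t c₀ c₁ q R H rin rout : ℝ}

lemma le_mul_inner_radius (hrout : rout ≤ c * rin) (hR : R ≤ rout + H) (hH : H ≤ t * rin) :
    R ≤ (c + t) * rin := by
  linarith

lemma inner_radius_le_mul_rpow (hc₁ : 0 < c₁) (hR : 0 < R) (hrin : 0 < rin)
    (hH : H ≤ t * rin) (hheight : c₁ * R ^ (-q) * rin ^ 2 ≤ H) :
    rin ≤ t / c₁ * R ^ q := by
  have h : c₁ * R ^ (-q) * rin ≤ t :=
    le_of_mul_le_mul_right (by linarith [hheight.trans hH]) hrin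
  rw [rpow_neg hR.le] at h
  have hRq : 0 < R ^ q := rpow_pos_of_pos hR q
  calc rin = c₁ * (R ^ q)⁻¹ * rin * (R ^ q / c₁) := by field_simp
    _ ≤ t * (R ^ q / c₁) := by gcongr
    _ = t / c₁ * R ^ q := by ring

lemma support_le_of_height_bound (hc₁ : 0 < c₁) (hct : 0 ≤ c + t) (hq : q < 1) (hR : 0 < R)
    (hrin : 0 < rin) (hrout : rout ≤ c * rin) (hRH : R ≤ rout + H) (hH : H ≤ t * rin)
    (hheight : c₁ * R ^ (-q) * rin ^ 2 ≤ H) :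
    R ≤ ((c + t) * t / c₁) ^ (1 - q)⁻¹ := by
  refine le_rpow_inv_of_le_mul_rpow hR hq ?_
  calc R ≤ (c + t) * rin := le_mul_inner_radius hrout hRH hH
    _ ≤ (c + t) * (t / c₁ * R ^ q) := by
      gcongr
      exact inner_radius_le_mul_rpow hc₁ hR hrin hH hheight
    _ = (c + t) * t / c₁ * R ^ q := by ring

lemma le_height_of_support_le {Rmax : ℝ} (hc₀ : 0 < c₀) (hc₁ : 0 < c₁) (hct : 0 < c + t)
    (hq : 0 < q) (hc₀R : c₀ ≤ R) (hRmax : R ≤ Rmax) (hRrin : R ≤ (c + t) * rin)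
    (hheight : c₁ * R ^ (-q) * rin ^ 2 ≤ H) :
    c₁ * Rmax ^ (-q) * (c₀ / (c + t)) ^ 2 ≤ H := by
  have hR : 0 < R := hc₀.trans_le hc₀R
  have hrin : c₀ / (c + t) ≤ rin := by
    rw [div_le_iff₀ hct]
    linarith
  have hRq : Rmax ^ (-q) ≤ R ^ (-q) := rpow_le_rpow_of_nonpos hR hRmax (neg_nonpos.2 hq.le)
  have : 0 ≤ Rmax ^ (-q) := rpow_nonneg (hR.le.trans hRmax) _
  refine le_trans ?_ hheight
  gcongr

end Skeleton

theorem c0_estimate_skeleton_general (k : ℕ) (p θ c c₀ c₁ : ℝ)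
    (hp : 1 < p) (hpk : p < k + 1) (hθ : θ ∈ Set.Ioo 0 (π / 2))
    (hc : 1 ≤ c) (hc₀ : 0 < c₀) (hc₁ : 0 < c₁) :
    ∃ C₁ : ℝ, 0 < C₁ ∧
      ∀ R H rin rout : ℝ, 0 < R → 0 < H → 0 < rin → 0 < rout →
        rin ≤ rout → rout ≤ c * rin →
        c₀ ≤ R → R ≤ rout + H →
        H ≤ Real.tan θ * rin →
        c₁ * R ^ ((1 - p) / (k : ℝ)) * rin ^ 2 ≤ H →
        C₁⁻¹ ≤ Real.cos θ * H ∧ R ≤ C₁ := by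
  set t := tan θ
  set q := (p - 1) / k
  have hk : (0 : ℝ) < k := by linarith
  have hq₀ : 0 < q := div_pos (by linarith) hk
  have hq₁ : q < 1 := (div_lt_one hk).2 (by linarith)
  have hexp : (1 - p) / (k : ℝ) = -q := by ring
  have ht : 0 < t := tan_pos_of_pos_of_lt_pi_div_two hθ.1 hθ.2
  have hcos : 0 < cos θ := cos_pos_of_mem_Ioo ⟨by linarith [pi_pos, hθ.1], hθ.2⟩
  have hct : 0 < c + t := by linarith
  set Rmax := ((c + t) * t / c₁) ^ (1 - q)⁻¹
  have hRmax : 0 < Rmax := rpow_pos_of_pos (by positivity) _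
  obtain ⟨C₁, hC₁, hC₁m, hC₁M⟩ := exists_pos_inv_le_and_le
    (m := cos θ * (c₁ * Rmax ^ (-q) * (c₀ / (c + t)) ^ 2)) (by positivity) hRmax
  refine ⟨C₁, hC₁, fun R H rin rout hR _ hrin _ _ hrout hc₀R hRH hH hheight => ?_⟩
  rw [hexp] at hheight
  have hRle : R ≤ Rmax := support_le_of_height_bound hc₁ hct.le hq₁ hR hrin hrout hRH hH hheight
  have hHge := le_height_of_support_le hc₀ hc₁ hct hq₀ hc₀R hRle
    (le_mul_inner_radius hrout hRH hH) hheight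
  exact ⟨hC₁m.trans (mul_le_mul_of_nonneg_left hHge hcos.le), hRle.trans hC₁M⟩

/-- The real-variable skeleton of the `C⁰` estimate for the even
capillary `L_p`-curvature problem: for `k ≥ 1`, `1 < p < k + 1`, `θ ∈ (0, π/2)`,
`c ≥ 1`, `c₀ > 0`, `c₁ > 0`, there is a constant `C₁ > 0` (depending only on
`k, p, θ, c, c₀, c₁`) such that whenever positive reals `R, H, r_in, r_out` satisfy
(i) `r_in ≤ r_out ≤ c · r_in`, (ii) `c₀ ≤ R ≤ r_out + H`, (iii) `H ≤ tan θ · r_in`, and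
(iv) `H ≥ c₁ · R^((1-p)/k) · r_in²`, one has `C₁⁻¹ ≤ cos θ · H` and `R ≤ C₁`. -/
theorem c0_estimate_skeleton (k : ℕ) (hk : 1 ≤ k) (p θ c c₀ c₁ : ℝ)
    (hp : 1 < p) (hpk : p < k + 1) (hθ : θ ∈ Set.Ioo 0 (π / 2))
    (hc : 1 ≤ c) (hc₀ : 0 < c₀) (hc₁ : 0 < c₁) :
    ∃ C₁ : ℝ, 0 < C₁ ∧
      ∀ R H rin rout : ℝ, 0 < R → 0 < H → 0 < rin → 0 < rout →
        rin ≤ rout → rout ≤ c * rin →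
        c₀ ≤ R → R ≤ rout + H →
        H ≤ Real.tan θ * rin →
        c₁ * R ^ ((1 - p) / (k : ℝ)) * rin ^ 2 ≤ H →
        C₁⁻¹ ≤ Real.cos θ * H ∧ R ≤ C₁ :=
  c0_estimate_skeleton_general k p θ c c₀ c₁ hp hpk hθ hc hc₀ hc₁
end
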